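/- (Finite-volume form of the generalized Peierls–Griffiths theorem.) Let A ≥ 1, J_min > 0 and β > 0 satisfy A · e^{−2 β J_min} ≤ 1/9. Then for every finite connected simple graph G = (V,E) with couplings J(e) ≥ J_min such that μ^p(b) ≤ A^b for all p ∈ V and all b ≥ 1, the Gibbs expectation of |M| at inverse temperature β satisfies E_β[ |M| ] ≥ 1/2. In particular the lower bound is uniform in the size of the graph: if the number of borders of length b internal to any point grows at most exponentially in b, spontaneous magnetization is achieved at low enough temperature. -/

import Mathlib

/-!
Peierls' argument. Write `D(τ)` for the disagreement edges of a configuration. Repeatedly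
flipping one side of a border contained in `D(τ)` shows `n - |Σ σ| ≤ 2 Σ_p N_p(τ)`, where
`N_p(τ)` counts the borders internal to `p` contained in `D(τ)`. Flipping a side of a fixed
border `B` is an injection on configurations that lowers the energy by at least `2 Jmin |B|`, so
the Gibbs weight of `B ⊆ D(τ)` is at most `e^{-2 β Jmin |B|}`. With `μ^p(b) ≤ A^b` this gives
`E[N_p] ≤ Σ_{b ≥ 1} 9^{-b} = 1/8` for every `p`, hence `E[1 - |M|] ≤ 1/4`.
-/

open scoped BigOperators Classical

namespace PG

variable {V : Type*}

/-- The product of the spins at the two endpoints of an unordered pair. -/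
def spinProd (σ : V → ℤ) : Sym2 V → ℤ :=
  Sym2.lift ⟨fun i j => σ i * σ j, fun i j => mul_comm (σ i) (σ j)⟩

/-- The spins at the two endpoints of an unordered pair disagree. -/
def Disagrees (σ : V → ℤ) : Sym2 V → Prop :=
  Sym2.lift ⟨fun i j => σ i ≠ σ j, fun i j => propext ne_comm⟩

/-- The disagreement edge set D(σ) of a spin configuration. -/
def disagreeSet (G : SimpleGraph V) (σ : V → ℤ) : Set (Sym2 V) :=
  {e | e ∈ G.edgeSet ∧ Disagrees σ e}

/-- A spin configuration takes values ±1. -/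
def IsSpin (σ : V → ℤ) : Prop := ∀ v, σ v = 1 ∨ σ v = -1

/-- `B` is a border of `G` with sides `P₁`, `P₂`. -/
structure IsBorderWith (G : SimpleGraph V) (B : Set (Sym2 V)) (P₁ P₂ : Set V) : Prop where
  disj : Disjoint P₁ P₂
  cover : P₁ ∪ P₂ = Set.univ
  ne₁ : P₁.Nonempty
  ne₂ : P₂.Nonempty
  conn₁ : (G.induce P₁).Connected
  conn₂ : (G.induce P₂).Connected
  eq_edges : B = {e | e ∈ G.edgeSet ∧ ∃ i ∈ P₁, ∃ j ∈ P₂, e = s(i, j)}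

/-- `B` is a border of `G`. -/
def IsBorder (G : SimpleGraph V) (B : Set (Sym2 V)) : Prop :=
  ∃ P₁ P₂ : Set V, IsBorderWith G B P₁ P₂

/-- `p` is internal to the border `B`: it lies on the side with no more vertices. -/
def InternalTo (G : SimpleGraph V) (p : V) (B : Set (Sym2 V)) : Prop :=
  ∃ P₁ P₂ : Set V, IsBorderWith G B P₁ P₂ ∧ p ∈ P₁ ∧ P₁.ncard ≤ P₂.ncard

/-- μ^p(b): the number of borders of cardinality `b` to which `p` is internal. -/
noncomputable def mu (G : SimpleGraph V) (p : V) (b : ℕ) : ℕ :=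
  {B : Finset (Sym2 V) | B.card = b ∧ InternalTo G p ↑B}.ncard

/-- The vertex border of `B` on side `P`: endpoints of edges of `B` lying in `P`. -/
def vertexBorder (B : Set (Sym2 V)) (P : Set V) : Set V :=
  {v | v ∈ P ∧ ∃ e ∈ B, v ∈ e}

/-- Encoding of spin configurations by boolean functions. -/
def toSpin (τ : V → Bool) : V → ℤ := fun v => if τ v then 1 else -1

/-- The zero-field Ising Hamiltonian. -/
noncomputable def hamiltonian [Fintype V] (G : SimpleGraph V) [Fintype G.edgeSet]
    (J : Sym2 V → ℝ) (σ : V → ℤ) : ℝ :=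
  -∑ e ∈ G.edgeFinset, J e * (spinProd σ e : ℝ)

/-- The partition function Z at inverse temperature β. -/
noncomputable def partitionZ [Fintype V] [DecidableEq V] (G : SimpleGraph V)
    [Fintype G.edgeSet] (J : Sym2 V → ℝ) (β : ℝ) : ℝ :=
  ∑ τ : V → Bool, Real.exp (-β * hamiltonian G J (toSpin τ))

/-- Gibbs expectation of an observable `f` at inverse temperature β. -/
noncomputable def gibbsExp [Fintype V] [DecidableEq V] (G : SimpleGraph V)
    [Fintype G.edgeSet] (J : Sym2 V → ℝ) (β : ℝ) (f : (V → ℤ) → ℝ) : ℝ :=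
  (∑ τ : V → Bool, f (toSpin τ) * Real.exp (-β * hamiltonian G J (toSpin τ))) /
    partitionZ G J β

/-- Gibbs probability of an event `S` at inverse temperature β. -/
noncomputable def gibbsProb [Fintype V] [DecidableEq V] (G : SimpleGraph V)
    [Fintype G.edgeSet] (J : Sym2 V → ℝ) (β : ℝ) (S : (V → ℤ) → Prop) : ℝ :=
  gibbsExp G J β (fun σ => if S σ then 1 else 0)

/-- The magnetization M(σ). -/
noncomputable def magn [Fintype V] (σ : V → ℤ) : ℝ :=
  (∑ i, (σ i : ℝ)) / (Fintype.card V : ℝ)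

/-- The external vertex boundary of a set of vertices. -/
def extBoundary (G : SimpleGraph V) (A : Set V) : Set V :=
  {v | v ∉ A ∧ ∃ a ∈ A, G.Adj v a}

/-- A (C,d)-isoperimetric inequality. -/
def IsoIneq (G : SimpleGraph V) (C d : ℝ) : Prop :=
  ∀ A : Set V, A.Finite → A.Nonempty → A ≠ Set.univ →
    (extBoundary G A).Infinite ∨
      C * (A.ncard : ℝ) ^ ((d - 1) / d) ≤ ((extBoundary G A).ncard : ℝ)

/-- `G` has growth exponent `df`: balls of radius `r ≥ 1` contain at most `r^df` vertices. -/
def HasGrowth (G : SimpleGraph V) (df : ℝ) : Prop :=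
  ∀ p : V, ∀ r : ℕ, 1 ≤ r → (({q : V | G.dist p q ≤ r}).ncard : ℝ) ≤ (r : ℝ) ^ df

/-- ν_q(b): the number of vertex sets containing `q` arising as a vertex border of a
border of cardinality `b`. -/
noncomputable def nu (G : SimpleGraph V) (q : V) (b : ℕ) : ℕ :=
  {S : Set V | q ∈ S ∧ ∃ (B : Finset (Sym2 V)) (P₁ P₂ : Set V),
    IsBorderWith G ↑B P₁ P₂ ∧ B.card = b ∧ S = vertexBorder ↑B P₂}.ncard

open Finset

lemma card_filter_subset_sdiff_add_le {α : Type*} [DecidableEq α] (𝓕 : Finset (Finset α))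
    {B D : Finset α} (hBD : B ⊆ D) (hB : B.Nonempty) :
    #{B' ∈ 𝓕 | B' ⊆ D \ B} + (if B ∈ 𝓕 then 1 else 0) ≤
      #{B' ∈ 𝓕 | B' ⊆ D} := by
  have hmono : {B' ∈ 𝓕 | B' ⊆ D \ B} ⊆ {B' ∈ 𝓕 | B' ⊆ D} := fun _ h => by
    rw [Finset.mem_filter] at h ⊢
    exact ⟨h.1, h.2.trans Finset.sdiff_subset⟩
  split
  · have hnot : B ∉ {B' ∈ 𝓕 | B' ⊆ D \ B} := fun h => by
      obtain ⟨x, hx⟩ := hB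
      exact (Finset.mem_sdiff.mp ((Finset.mem_filter.mp h).2 hx)).2 hx
    rw [← Finset.card_insert_of_notMem hnot]
    exact Finset.card_le_card (Finset.insert_subset (by simp [*]) hmono)
  · simpa using Finset.card_le_card hmono

lemma sum_pow_le_of_card_fiber_le {ι : Type*} (s : Finset ι) (f : ι → ℕ)
    (hf : ∀ i ∈ s, 0 < f i) {A x : ℝ} (hA : 0 ≤ A) (hx : 0 ≤ x) (hAx : A * x < 1)
    (hfiber : ∀ b, 1 ≤ b → (#{i ∈ s | f i = b} : ℝ) ≤ A ^ b) :
    ∑ i ∈ s, x ^ f i ≤ A * x / (1 - A * x) := by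
  have hmaps : ∀ i ∈ s, f i ∈ Finset.Ico 1 (s.sup f + 1) := fun i hi =>
    Finset.mem_Ico.mpr ⟨hf i hi, Nat.lt_succ_of_le (Finset.le_sup hi)⟩
  rw [← Finset.sum_fiberwise_of_maps_to hmaps]
  calc ∑ b ∈ Finset.Ico 1 (s.sup f + 1), ∑ i ∈ s with f i = b, x ^ f i
      = ∑ b ∈ Finset.Ico 1 (s.sup f + 1), #{i ∈ s | f i = b} * x ^ b := by
        refine Finset.sum_congr rfl fun b _ => ?_
        rw [Finset.sum_congr rfl fun i hi => by rw [(Finset.mem_filter.mp hi).2],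
          Finset.sum_const, nsmul_eq_mul]
    _ ≤ ∑ b ∈ Finset.Ico 1 (s.sup f + 1), (A * x) ^ b := by
        refine Finset.sum_le_sum fun b hb => ?_
        rw [mul_pow]
        gcongr
        exact hfiber b (Finset.mem_Ico.mp hb).1
    _ ≤ A * x / (1 - A * x) := by
        simpa using geom_sum_Ico_le_of_lt_one (m := 1) (by positivity) hAx

section Spins

variable {V : Type*}

lemma toSpin_eq_toSpin_iff {τ : V → Bool} {a b : V} :
    toSpin τ a = toSpin τ b ↔ τ a = τ b := by
  unfold toSpin
  cases τ a <;> cases τ b <;> simp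

lemma disagrees_toSpin_mk {τ : V → Bool} {a b : V} :
    Disagrees (toSpin τ) s(a, b) ↔ τ a ≠ τ b :=
  toSpin_eq_toSpin_iff.not

lemma abs_toSpin (τ : V → Bool) (v : V) : |toSpin τ v| = 1 := by
  unfold toSpin
  split <;> simp

lemma spinProd_toSpin (τ : V → Bool) (e : Sym2 V) :
    spinProd (toSpin τ) e = if Disagrees (toSpin τ) e then -1 else 1 := by
  induction e using Sym2.ind with
  | _ a b =>
    rw [disagrees_toSpin_mk]
    change toSpin τ a * toSpin τ b = _
    unfold toSpin
    cases τ a <;> cases τ b <;> simp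

noncomputable def flipOn (P : Set V) (τ : V → Bool) : V → Bool :=
  fun v => if v ∈ P then !τ v else τ v

lemma flipOn_involutive (P : Set V) : Function.Involutive (flipOn P) := by
  intro τ
  funext v
  unfold flipOn
  split <;> simp

lemma toSpin_flipOn (P : Set V) (τ : V → Bool) (v : V) :
    toSpin (flipOn P τ) v = if v ∈ P then -toSpin τ v else toSpin τ v := by
  unfold toSpin flipOn
  split <;> cases τ v <;> simp

lemma disagrees_toSpin_flipOn_mk (P : Set V) (τ : V → Bool) (a b : V) :
    Disagrees (toSpin (flipOn P τ)) s(a, b) ↔ (τ a ≠ τ b ↔ (a ∈ P ↔ b ∈ P)) := by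
  rw [disagrees_toSpin_mk]
  unfold flipOn
  by_cases ha : a ∈ P <;> by_cases hb : b ∈ P <;> cases τ a <;> cases τ b <;> simp [ha, hb]

variable [Fintype V]

def spinSum (τ : V → Bool) : ℤ := ∑ v, toSpin τ v

lemma magn_toSpin (τ : V → Bool) : magn (toSpin τ) = spinSum τ / Fintype.card V := by
  simp [magn, spinSum]

lemma abs_spinSum_of_forall_eq {τ : V → Bool} {v₀ : V} (h : ∀ v, τ v = τ v₀) :
    |spinSum τ| = Fintype.card V := by
  have hconst : ∀ v, toSpin τ v = toSpin τ v₀ := fun v => toSpin_eq_toSpin_iff.mpr (h v)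
  simp [spinSum, hconst, abs_mul, abs_toSpin]

lemma abs_spinSum_flipOn_le_ncard (P : Set V) (τ : V → Bool) :
    |spinSum (flipOn P τ)| ≤ |spinSum τ| + 2 * P.ncard := by
  have hdiff : ∀ v, |toSpin (flipOn P τ) v - toSpin τ v| = if v ∈ P then 2 else 0 := by
    intro v
    rw [toSpin_flipOn]
    split
    · rw [show -toSpin τ v - toSpin τ v = -2 * toSpin τ v by ring, abs_mul, abs_toSpin]
      rfl
    · simp
  calc |spinSum (flipOn P τ)|
      ≤ |spinSum τ| + |spinSum (flipOn P τ) - spinSum τ| := by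
        linarith [abs_sub_abs_le_abs_sub (spinSum (flipOn P τ)) (spinSum τ)]
    _ ≤ |spinSum τ| + ∑ v, |toSpin (flipOn P τ) v - toSpin τ v| := by
        rw [spinSum, spinSum, ← Finset.sum_sub_distrib]
        gcongr
        exact Finset.abs_sum_le_sum_abs _ _
    _ = |spinSum τ| + 2 * P.ncard := by
        simp only [hdiff, Finset.sum_ite, Finset.sum_const_zero, Finset.sum_const]
        rw [← Set.ncard_coe_finset]
        simp [mul_comm]

lemma spinSum_flipOn_compl (P : Set V) (τ : V → Bool) :
    spinSum (flipOn Pᶜ τ) = -spinSum (flipOn P τ) := by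
  simp only [spinSum, toSpin_flipOn, Set.mem_compl_iff, ← Finset.sum_neg_distrib]
  congr 1
  funext v
  split <;> simp_all

lemma abs_spinSum_flipOn_le (P : Set V) (τ : V → Bool) :
    |spinSum (flipOn P τ)| ≤ |spinSum τ| + 2 * min P.ncard Pᶜ.ncard := by
  have hcompl := abs_spinSum_flipOn_le_ncard Pᶜ τ
  rw [spinSum_flipOn_compl, abs_neg] at hcompl
  rcases le_total P.ncard Pᶜ.ncard with h | h
  · rw [min_eq_left h]; exact abs_spinSum_flipOn_le_ncard P τ
  · rw [min_eq_right h]; exact hcompl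

end Spins

namespace IsBorderWith

variable {V : Type*} {G : SimpleGraph V} {B : Set (Sym2 V)} {P₁ P₂ : Set V}

lemma symm (h : IsBorderWith G B P₁ P₂) : IsBorderWith G B P₂ P₁ where
  disj := h.disj.symm
  cover := by rw [Set.union_comm, h.cover]
  ne₁ := h.ne₂
  ne₂ := h.ne₁
  conn₁ := h.conn₂
  conn₂ := h.conn₁
  eq_edges := by
    rw [h.eq_edges]
    ext e
    constructor <;>
    · rintro ⟨he, i, hi, j, hj, rfl⟩
      exact ⟨he, j, hj, i, hi, Sym2.eq_swap⟩

lemma compl_eq (h : IsBorderWith G B P₁ P₂) : P₁ᶜ = P₂ :=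
  (IsCompl.of_eq h.disj.eq_bot h.cover).compl_eq

lemma subset_edgeSet (h : IsBorderWith G B P₁ P₂) : B ⊆ G.edgeSet := by
  rw [h.eq_edges]
  exact fun _ he => he.1

lemma mk_mem_iff (h : IsBorderWith G B P₁ P₂) {a b : V} (hab : G.Adj a b) :
    s(a, b) ∈ B ↔ ¬(a ∈ P₁ ↔ b ∈ P₁) := by
  rw [h.eq_edges, ← h.compl_eq]
  simp only [Set.mem_ofPred_eq, SimpleGraph.mem_edgeSet, hab, true_and, Set.mem_compl_iff,
    Sym2.eq_iff]
  constructor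
  · rintro ⟨i, hi, j, hj, ⟨rfl, rfl⟩ | ⟨rfl, rfl⟩⟩ <;> tauto
  · intro hcross
    by_cases ha : a ∈ P₁
    · exact ⟨a, ha, b, by tauto, Or.inl ⟨rfl, rfl⟩⟩
    · exact ⟨b, by tauto, a, ha, Or.inr ⟨rfl, rfl⟩⟩

lemma nonempty (h : IsBorderWith G B P₁ P₂) (hG : G.Connected) : B.Nonempty := by
  obtain ⟨u, hu⟩ := h.ne₁
  obtain ⟨v, hv⟩ := h.ne₂
  obtain ⟨p⟩ := hG.preconnected u v
  obtain ⟨d, -, hd₁, hd₂⟩ := p.exists_boundary_dart P₁ hu (by rwa [← h.compl_eq] at hv)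
  exact ⟨s(d.fst, d.snd), (h.mk_mem_iff d.adj).mpr (by tauto)⟩

end IsBorderWith

section Borders

variable {V : Type*} [Fintype V] {G : SimpleGraph V}

noncomputable def internalBorders (G : SimpleGraph V) (p : V) : Finset (Finset (Sym2 V)) :=
  {B | InternalTo G p ↑B}

lemma mu_eq_card (G : SimpleGraph V) (p : V) (b : ℕ) :
    mu G p b = #{B ∈ internalBorders G p | B.card = b} := by
  rw [mu, ← Set.ncard_coe_finset]
  congr 1
  ext B
  simp [internalBorders, and_comm]

lemma card_pos_of_mem_internalBorders (hG : G.Connected) {p : V} {B : Finset (Sym2 V)}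
    (hB : B ∈ internalBorders G p) : 0 < B.card := by
  obtain ⟨P₁, P₂, h, -⟩ := (Finset.mem_filter.mp hB).2
  exact Finset.card_pos.mpr (Finset.coe_nonempty.mp (h.nonempty hG))

lemma min_ncard_le_card_internalTo {B : Set (Sym2 V)} {P₁ P₂ : Set V}
    (h : IsBorderWith G B P₁ P₂) : min P₁.ncard P₂.ncard ≤ #{p | InternalTo G p B} := by
  rw [← Set.ncard_coe_finset, Finset.coe_filter_univ]
  rcases le_total P₁.ncard P₂.ncard with hle | hle
  · exact (min_le_left _ _).trans
      (Set.ncard_le_ncard (fun p hp => ⟨P₁, P₂, h, hp, hle⟩))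
  · exact (min_le_right _ _).trans
      (Set.ncard_le_ncard (fun p hp => ⟨P₂, P₁, h.symm, hp, hle⟩))

end Borders

section Disagreement

variable {V : Type*} [Fintype V] {G : SimpleGraph V}

noncomputable def disagreeEdges (G : SimpleGraph V) (τ : V → Bool) : Finset (Sym2 V) :=
  {e | e ∈ disagreeSet G (toSpin τ)}

lemma mem_disagreeEdges {τ : V → Bool} {e : Sym2 V} :
    e ∈ disagreeEdges G τ ↔ e ∈ G.edgeSet ∧ Disagrees (toSpin τ) e := by
  simp only [disagreeEdges, Finset.mem_filter, Finset.mem_univ, true_and]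
  rfl

lemma hamiltonian_toSpin [Fintype G.edgeSet] (J : Sym2 V → ℝ) (τ : V → Bool) :
    hamiltonian G J (toSpin τ) =
      -∑ e ∈ G.edgeFinset, J e + 2 * ∑ e ∈ disagreeEdges G τ, J e := by
  have hD : disagreeEdges G τ = {e ∈ G.edgeFinset | Disagrees (toSpin τ) e} := by
    ext e
    simp [mem_disagreeEdges]
  rw [hamiltonian, hD, Finset.sum_filter, Finset.mul_sum, ← Finset.sum_neg_distrib,
    ← Finset.sum_neg_distrib, ← Finset.sum_add_distrib]
  refine Finset.sum_congr rfl fun e _ => ?_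
  rw [spinProd_toSpin]
  split <;> push_cast <;> ring

variable [DecidableEq V]

lemma disagreeEdges_flipOn {B : Finset (Sym2 V)} {P₁ P₂ : Set V} {τ : V → Bool}
    (hB : IsBorderWith G ↑B P₁ P₂) (hBD : B ⊆ disagreeEdges G τ) :
    disagreeEdges G (flipOn P₁ τ) = disagreeEdges G τ \ B := by
  ext e
  induction e using Sym2.ind with
  | _ a b =>
    rw [Finset.mem_sdiff, mem_disagreeEdges, mem_disagreeEdges, disagrees_toSpin_flipOn_mk,
      disagrees_toSpin_mk, SimpleGraph.mem_edgeSet]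
    by_cases hab : G.Adj a b
    · have hcross := hB.mk_mem_iff hab
      have hBD' : s(a, b) ∈ B → τ a ≠ τ b := fun h =>
        disagrees_toSpin_mk.mp (mem_disagreeEdges.mp (hBD h)).2
      rw [← Finset.mem_coe]
      tauto
    · simp [hab]

lemma hamiltonian_flipOn [Fintype G.edgeSet] (J : Sym2 V → ℝ) {B : Finset (Sym2 V)}
    {P₁ P₂ : Set V} {τ : V → Bool} (hB : IsBorderWith G ↑B P₁ P₂)
    (hBD : B ⊆ disagreeEdges G τ) :
    hamiltonian G J (toSpin (flipOn P₁ τ)) =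
      hamiltonian G J (toSpin τ) - 2 * ∑ e ∈ B, J e := by
  rw [hamiltonian_toSpin, hamiltonian_toSpin, disagreeEdges_flipOn hB hBD,
    Finset.sum_sdiff_eq_sub hBD]
  ring

end Disagreement

section Components

variable {V : Type*} {G : SimpleGraph V}

def componentIn (G : SimpleGraph V) (s : Set V) (u : V) : Set V :=
  {v | ∃ p : G.Walk u v, ∀ w ∈ p.support, w ∈ s}

lemma componentIn_subset {s : Set V} {u : V} : componentIn G s u ⊆ s :=
  fun _ ⟨p, hp⟩ => hp _ p.end_mem_support

lemma mem_componentIn_self {s : Set V} {u : V} (hu : u ∈ s) : u ∈ componentIn G s u :=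
  ⟨.nil, by simpa⟩

lemma mem_componentIn_of_adj {s : Set V} {u v w : V} (hv : v ∈ componentIn G s u) (hw : w ∈ s)
    (hvw : G.Adj v w) : w ∈ componentIn G s u := by
  obtain ⟨p, hp⟩ := hv
  refine ⟨p.concat hvw, fun x hx => ?_⟩
  rw [SimpleGraph.Walk.support_concat, List.mem_append, List.mem_singleton] at hx
  rcases hx with hx | rfl
  exacts [hp x hx, hw]

lemma connected_induce_componentIn {s : Set V} {u : V} (hu : u ∈ s) :
    (G.induce (componentIn G s u)).Connected := by
  refine G.induce_connected_of_patches u (mem_componentIn_self hu) fun {v} ⟨p, hp⟩ => ?_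
  refine ⟨{x | x ∈ p.support}, fun x hx => ⟨p.takeUntil x hx, fun w hw => ?_⟩,
    p.start_mem_support, p.end_mem_support, p.connected_induce_support.preconnected _ _⟩
  exact hp w (p.support_takeUntil_subset_support hx hw)

lemma connected_induce_of_boundary_subset (hG : G.Connected) {C S : Set V}
    (hC : (G.induce C).Connected) (hCS : C ⊆ S)
    (hbd : ∀ a ∈ S, ∀ b ∉ S, G.Adj a b → a ∈ C) :
    (G.induce S).Connected := by
  obtain ⟨⟨c₀, hc₀⟩⟩ := hC.nonempty
  have reach_of_mem (a : V) (ha : a ∈ C) :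
      (G.induce S).Reachable ⟨a, hCS ha⟩ ⟨c₀, hCS hc₀⟩ :=
    (hC.preconnected ⟨a, ha⟩ ⟨c₀, hc₀⟩).map (G.induceHomOfLE hCS).toHom
  have reach (v c : V) (p : G.Walk v c) (hc : c ∈ C) (hv : v ∈ S) :
      (G.induce S).Reachable ⟨v, hv⟩ ⟨c₀, hCS hc₀⟩ := by
    induction p with
    | nil => exact reach_of_mem _ hc
    | @cons a b c hab q ih =>
      by_cases haC : a ∈ C
      · exact reach_of_mem a haC
      · have hb : b ∈ S := by
          by_contra hb
          exact haC (hbd a hv b hb hab)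
        exact (show (G.induce S).Adj ⟨a, hv⟩ ⟨b, hb⟩ from hab).reachable.trans (ih hc hb)
  rw [SimpleGraph.connected_iff_exists_forall_reachable]
  exact ⟨⟨c₀, hCS hc₀⟩, fun ⟨v, hv⟩ =>
    (reach v c₀ (hG.preconnected v c₀).some hc₀ hv).symm⟩

/-- The side `P` is the complement of the component of `j` in the complement of the same-spin
cluster of `i`. -/
lemma exists_connected_sides_of_ne (hG : G.Connected) (τ : V → Bool) {i j : V}
    (hτ : τ i ≠ τ j) :
    ∃ P : Set V, P.Nonempty ∧ Pᶜ.Nonempty ∧ (G.induce P).Connected ∧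
      (G.induce Pᶜ).Connected ∧ ∀ a ∈ P, ∀ b ∉ P, G.Adj a b → τ a ≠ τ b := by
  set C := componentIn G {v | τ v = τ i} i
  set K := componentIn G Cᶜ j
  have hCτ : ∀ v ∈ C, τ v = τ i := fun v hv => componentIn_subset (s := {v | τ v = τ i}) hv
  have hjC : j ∉ C := fun hj => hτ (hCτ j hj).symm
  have hKC : ∀ v ∈ K, v ∉ C := fun v hv => componentIn_subset hv
  have hbd : ∀ a ∉ K, ∀ b ∈ K, G.Adj a b → a ∈ C := by
    intro a ha b hb hab
    by_contra haC
    exact ha (mem_componentIn_of_adj hb haC hab.symm)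
  have hi : i ∈ {v | τ v = τ i} := rfl
  refine ⟨Kᶜ, ⟨i, fun hiK => hKC i hiK (mem_componentIn_self hi)⟩,
    ⟨j, by simpa using mem_componentIn_self hjC⟩, ?_, ?_, ?_⟩
  · exact connected_induce_of_boundary_subset hG (connected_induce_componentIn hi)
      (fun v hv hvK => hKC v hvK hv) (fun a ha b hb => hbd a ha b (not_not.mp hb))
  · rw [compl_compl]
    exact connected_induce_componentIn hjC
  · intro a ha b hb hab hab'
    have haC := hbd a ha b (not_not.mp hb) hab
    exact hKC b (not_not.mp hb)
      (mem_componentIn_of_adj haC (hab'.symm.trans (hCτ a haC)) hab)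

lemma exists_isBorderWith_subset_disagreeEdges [Fintype V] (hG : G.Connected) {τ : V → Bool}
    (hD : (disagreeEdges G τ).Nonempty) :
    ∃ (B : Finset (Sym2 V)) (P : Set V),
      IsBorderWith G ↑B P Pᶜ ∧ B ⊆ disagreeEdges G τ := by
  obtain ⟨e, he⟩ := hD
  induction e using Sym2.ind with
  | _ i j =>
  obtain ⟨-, hτ⟩ := mem_disagreeEdges.mp he
  obtain ⟨P, hP, hPc, hPconn, hPcconn, hcross⟩ :=
    exists_connected_sides_of_ne hG τ (disagrees_toSpin_mk.mp hτ)
  refine ⟨({e | e ∈ G.edgeSet ∧ ∃ a ∈ P, ∃ b ∈ Pᶜ, e = s(a, b)} : Finset _), P,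
    ⟨disjoint_compl_right, Set.union_compl_self P, hP, hPc, hPconn, hPcconn, by ext; simp⟩,
    ?_⟩
  intro e he
  obtain ⟨he, a, ha, b, hb, rfl⟩ := (Finset.mem_filter.mp he).2
  exact mem_disagreeEdges.mpr ⟨he, disagrees_toSpin_mk.mpr (hcross a ha b hb he)⟩

end Components

section Counting

variable {V : Type*} [Fintype V] {G : SimpleGraph V}

lemma abs_spinSum_of_disagreeEdges_eq_empty (hG : G.Connected) {τ : V → Bool}
    (hD : disagreeEdges G τ = ∅) : |spinSum τ| = Fintype.card V := by
  obtain ⟨v₀⟩ := hG.nonempty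
  refine abs_spinSum_of_forall_eq (v₀ := v₀) fun v => ?_
  obtain ⟨p⟩ := hG.preconnected v v₀
  induction p with
  | nil => rfl
  | cons hab _ ih =>
    refine Eq.trans ?_ ih
    by_contra hne
    have := mem_disagreeEdges.mpr ⟨hab, disagrees_toSpin_mk.mpr hne⟩
    simp [hD] at this

variable [DecidableEq V]

/-- Flipping a side `P` of a border `B ⊆ D(τ)` removes exactly `B` from `D(τ)` and moves
`|Σ σ|` by at most twice the smaller side, all of whose vertices are internal to `B`. -/
theorem card_sub_abs_spinSum_le (hG : G.Connected) (τ : V → Bool) :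
    (Fintype.card V : ℤ) - |spinSum τ| ≤
      2 * ∑ p, (#{B ∈ internalBorders G p | B ⊆ disagreeEdges G τ} : ℤ) := by
  induction hn : #(disagreeEdges G τ) using Nat.strong_induction_on generalizing τ with
  | _ n ih =>
  obtain hD | hD := (disagreeEdges G τ).eq_empty_or_nonempty
  · rw [abs_spinSum_of_disagreeEdges_eq_empty hG hD, sub_self]
    positivity
  obtain ⟨B, P, hB, hBD⟩ := exists_isBorderWith_subset_disagreeEdges hG hD
  have hBne : B.Nonempty := Finset.coe_nonempty.mp (hB.nonempty hG)
  have hD' := disagreeEdges_flipOn hB hBD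
  have hlt : #(disagreeEdges G (flipOn P τ)) < n := by
    rw [hD', ← hn]
    exact Finset.card_lt_card (Finset.sdiff_ssubset hBD hBne)
  have hrec := ih _ hlt (flipOn P τ) rfl
  have hspin := abs_spinSum_flipOn_le P τ
  have hcount : ∑ p, #{B' ∈ internalBorders G p | B' ⊆ disagreeEdges G (flipOn P τ)} +
      #{p | InternalTo G p ↑B} ≤
        ∑ p, #{B' ∈ internalBorders G p | B' ⊆ disagreeEdges G τ} := by
    rw [hD', Finset.card_filter, ← Finset.sum_add_distrib]
    gcongr with p
    simpa [internalBorders] using card_filter_subset_sdiff_add_le (internalBorders G p) hBD hBne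
  have hinternal : (min P.ncard Pᶜ.ncard : ℤ) ≤ #{p | InternalTo G p ↑B} := by
    exact_mod_cast min_ncard_le_card_internalTo hB
  have hcount' := (Nat.cast_le (α := ℤ)).mpr hcount
  push_cast at hcount' hspin
  linarith

lemma one_sub_abs_magn_le (hG : G.Connected) (τ : V → Bool) :
    1 - |magn (toSpin τ)| ≤
      2 / Fintype.card V *
        ∑ p, (#{B ∈ internalBorders G p | B ⊆ disagreeEdges G τ} : ℝ) := by
  have hn : (0 : ℝ) < Fintype.card V := by
    have := hG.nonempty
    exact_mod_cast Fintype.card_pos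
  have h : (Fintype.card V : ℝ) - |(spinSum τ : ℝ)| ≤
      2 * ∑ p, (#{B ∈ internalBorders G p | B ⊆ disagreeEdges G τ} : ℝ) := by
    exact_mod_cast card_sub_abs_spinSum_le hG τ
  rw [magn_toSpin, abs_div, Nat.abs_cast, one_sub_div hn.ne', div_mul_eq_mul_div,
    div_le_div_iff_of_pos_right hn]
  exact h

end Counting

section Peierls

variable {V : Type*} [Fintype V] {G : SimpleGraph V} [Fintype G.edgeSet] {J : Sym2 V → ℝ}
  {β Jmin : ℝ}

noncomputable def boltzmann (G : SimpleGraph V) [Fintype G.edgeSet] (J : Sym2 V → ℝ) (β : ℝ)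
    (τ : V → Bool) : ℝ :=
  Real.exp (-β * hamiltonian G J (toSpin τ))

lemma boltzmann_pos (τ : V → Bool) : 0 < boltzmann G J β τ := Real.exp_pos _

lemma boltzmann_le_flipOn (hβ : 0 ≤ β) (hJ : ∀ e ∈ G.edgeFinset, Jmin ≤ J e)
    {B : Finset (Sym2 V)} {P₁ P₂ : Set V} {τ : V → Bool} (hB : IsBorderWith G ↑B P₁ P₂)
    (hBD : B ⊆ disagreeEdges G τ) :
    boltzmann G J β τ ≤ Real.exp (-2 * β * Jmin) ^ #B * boltzmann G J β (flipOn P₁ τ) := by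
  have hJB : #B * Jmin ≤ ∑ e ∈ B, J e := by
    rw [← nsmul_eq_mul]
    exact Finset.card_nsmul_le_sum B J Jmin fun e he =>
      hJ e (SimpleGraph.mem_edgeFinset.mpr (hB.subset_edgeSet he))
  rw [boltzmann, boltzmann, hamiltonian_flipOn J hB hBD, ← Real.exp_nat_mul, ← Real.exp_add]
  gcongr
  nlinarith

variable [DecidableEq V]

lemma partitionZ_pos : 0 < partitionZ G J β :=
  Finset.sum_pos (fun τ _ => boltzmann_pos τ) Finset.univ_nonempty

/-- Peierls' estimate: flipping a side of `B` is injective and lowers the energy by at least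
`2 Jmin #B` on configurations whose disagreement edges contain `B`. -/
lemma sum_boltzmann_le (hβ : 0 ≤ β) (hJ : ∀ e ∈ G.edgeFinset, Jmin ≤ J e)
    {B : Finset (Sym2 V)} {P₁ P₂ : Set V} (hB : IsBorderWith G ↑B P₁ P₂) :
    ∑ τ with B ⊆ disagreeEdges G τ, boltzmann G J β τ ≤
      Real.exp (-2 * β * Jmin) ^ #B * partitionZ G J β := by
  calc ∑ τ with B ⊆ disagreeEdges G τ, boltzmann G J β τ
      ≤ ∑ τ with B ⊆ disagreeEdges G τ,
          Real.exp (-2 * β * Jmin) ^ #B * boltzmann G J β (flipOn P₁ τ) :=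
        Finset.sum_le_sum fun τ hτ => boltzmann_le_flipOn hβ hJ hB (Finset.mem_filter.mp hτ).2
    _ ≤ ∑ τ, Real.exp (-2 * β * Jmin) ^ #B * boltzmann G J β (flipOn P₁ τ) :=
        Finset.sum_le_sum_of_subset_of_nonneg (Finset.filter_subset _ _) fun τ _ _ =>
          mul_nonneg (by positivity) (boltzmann_pos _).le
    _ = Real.exp (-2 * β * Jmin) ^ #B * partitionZ G J β := by
        rw [← Finset.mul_sum]
        congr 1
        exact Equiv.sum_comp (Function.Involutive.toPerm _ (flipOn_involutive P₁)) _

lemma sum_card_internalBorders_mul_boltzmann_le (hβ : 0 ≤ β)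
    (hJ : ∀ e ∈ G.edgeFinset, Jmin ≤ J e) (p : V) :
    ∑ τ, #{B ∈ internalBorders G p | B ⊆ disagreeEdges G τ} * boltzmann G J β τ ≤
      (∑ B ∈ internalBorders G p, Real.exp (-2 * β * Jmin) ^ #B) * partitionZ G J β := by
  calc ∑ τ, #{B ∈ internalBorders G p | B ⊆ disagreeEdges G τ} * boltzmann G J β τ
      = ∑ B ∈ internalBorders G p,
          ∑ τ with B ⊆ disagreeEdges G τ, boltzmann G J β τ := by
        simp only [Finset.card_filter, Nat.cast_sum, Finset.sum_mul, Finset.sum_filter]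
        rw [Finset.sum_comm]
        simp
    _ ≤ ∑ B ∈ internalBorders G p, Real.exp (-2 * β * Jmin) ^ #B * partitionZ G J β :=
        Finset.sum_le_sum fun B hB => by
          obtain ⟨P₁, P₂, h, -⟩ := (Finset.mem_filter.mp hB).2
          exact sum_boltzmann_le hβ hJ h
    _ = _ := (Finset.sum_mul _ _ _).symm

theorem one_sub_two_mul_le_gibbsExp_abs_magn (hG : G.Connected) (hβ : 0 ≤ β)
    (hJ : ∀ e ∈ G.edgeFinset, Jmin ≤ J e) {c : ℝ}
    (hc : ∀ p, ∑ B ∈ internalBorders G p, Real.exp (-2 * β * Jmin) ^ #B ≤ c) :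
    1 - 2 * c ≤ gibbsExp G J β (fun σ => |magn σ|) := by
  have hZ : 0 < partitionZ G J β := partitionZ_pos
  have hn : (0 : ℝ) < Fintype.card V := by
    have := hG.nonempty
    exact_mod_cast Fintype.card_pos
  have hdefect :
      ∑ τ, (1 - |magn (toSpin τ)|) * boltzmann G J β τ ≤ 2 * c * partitionZ G J β :=
    calc ∑ τ, (1 - |magn (toSpin τ)|) * boltzmann G J β τ
        ≤ ∑ τ, 2 / Fintype.card V *
            ∑ p, #{B ∈ internalBorders G p | B ⊆ disagreeEdges G τ} * boltzmann G J β τ :=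
          Finset.sum_le_sum fun τ _ => by
            rw [← Finset.sum_mul, ← mul_assoc]
            exact mul_le_mul_of_nonneg_right (one_sub_abs_magn_le hG τ) (boltzmann_pos τ).le
      _ = 2 / Fintype.card V *
            ∑ p, ∑ τ,
              #{B ∈ internalBorders G p | B ⊆ disagreeEdges G τ} * boltzmann G J β τ := by
          rw [← Finset.mul_sum, Finset.sum_comm]
      _ ≤ 2 / Fintype.card V * ∑ _p : V, c * partitionZ G J β := by
          gcongr with p
          exact (sum_card_internalBorders_mul_boltzmann_le hβ hJ p).trans
            (mul_le_mul_of_nonneg_right (hc p) hZ.le)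
      _ = 2 * c * partitionZ G J β := by
          rw [Finset.sum_const, Finset.card_univ, nsmul_eq_mul]
          field_simp
  have hsplit : ∑ τ, |magn (toSpin τ)| * boltzmann G J β τ =
      partitionZ G J β - ∑ τ, (1 - |magn (toSpin τ)|) * boltzmann G J β τ := by
    rw [show partitionZ G J β = ∑ τ, boltzmann G J β τ from rfl]
    simp only [sub_mul, one_mul, Finset.sum_sub_distrib, sub_sub_cancel]
  rw [gibbsExp, le_div_iff₀ hZ]
  change _ ≤ ∑ τ, |magn (toSpin τ)| * boltzmann G J β τ
  linarith

end Peierls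

theorem stmt_8_general (A Jmin β : ℝ) (hA : 1 ≤ A) (hβ : 0 < β)
    (hsmall : A * Real.exp (-2 * β * Jmin) ≤ 1 / 9) :
    ∀ (V : Type) [Fintype V] [DecidableEq V] (G : SimpleGraph V) [DecidableRel G.Adj],
      G.Connected →
      ∀ J : Sym2 V → ℝ, (∀ e ∈ G.edgeFinset, Jmin ≤ J e) →
      (∀ p : V, ∀ b : ℕ, 1 ≤ b → (mu G p b : ℝ) ≤ A ^ b) →
      gibbsExp G J β (fun σ => |magn σ|) ≥ 1 / 2 := by
  intro V _ _ G _ hG J hJ hmu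
  have hborders (p : V) : ∑ B ∈ internalBorders G p, Real.exp (-2 * β * Jmin) ^ #B ≤ 1 / 8 :=
    calc _ ≤ A * Real.exp (-2 * β * Jmin) / (1 - A * Real.exp (-2 * β * Jmin)) :=
          sum_pow_le_of_card_fiber_le _ _ (fun B => card_pos_of_mem_internalBorders hG)
            (by linarith) (Real.exp_pos _).le (by linarith)
            fun b hb => by simpa only [mu_eq_card] using hmu p b hb
      _ ≤ 1 / 8 := by
          rw [div_le_iff₀ (by linarith)]
          linarith
  have := one_sub_two_mul_le_gibbsExp_abs_magn hG hβ.le hJ hborders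
  linarith

/-- finite-volume form of the generalized Peierls–Griffiths theorem: if
`A · exp(−2 β Jmin) ≤ 1/9` then for every finite connected graph with couplings at
least `Jmin` and `μ^p(b) ≤ A^b`, the Gibbs expectation of `|M|` is at least `1/2`,
uniformly in the size of the graph. -/
theorem stmt_8 (A Jmin β : ℝ) (hA : 1 ≤ A) (hJmin : 0 < Jmin) (hβ : 0 < β)
    (hsmall : A * Real.exp (-2 * β * Jmin) ≤ 1 / 9) :
    ∀ (V : Type) [Fintype V] [DecidableEq V] (G : SimpleGraph V) [DecidableRel G.Adj],
      G.Connected →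
      ∀ J : Sym2 V → ℝ, (∀ e ∈ G.edgeFinset, Jmin ≤ J e) →
      (∀ p : V, ∀ b : ℕ, 1 ≤ b → (mu G p b : ℝ) ≤ A ^ b) →
      gibbsExp G J β (fun σ => |magn σ|) ≥ 1 / 2 :=
  stmt_8_general A Jmin β hA hβ hsmall

end PG
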